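/- arXiv:2510.10706 — 2 statements merged into one kernel-verified Lean document; each statement's English description precedes it below -/
import Mathlib

section
/- Deleting a non-root vertex changes the Euler string by removing exactly two symbols: if T is a rooted ordered labeled tree, v a non-root vertex with matched Euler-string positions (ℓ, i), and U is the tree obtained from T by deleting v (promoting v's children, in order, to the position of v among its parent's children), then E(U) equals E(T) with the symbols at positions ℓ and i removed. Consequently the string edit distance between E(T) and E(U) is at most 2. -/
inductive LTree : Type
  | node : ℕ → List LTree → LTree

namespace LTree

/-- Euler string of a forest (ordered list of labeled subtrees). -/
def eulerF (m : ℕ) : List LTree → List ℕ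
  | [] => []
  | node b cs :: rest => b :: (eulerF m cs ++ (b + m) :: eulerF m rest)

/-- Euler string of a single tree viewed as a forest element. -/
def eulerT (m : ℕ) (t : LTree) : List ℕ := eulerF m [t]

/-- Labels of all vertices of a forest. -/
def labelsF : List LTree → List ℕ
  | [] => []
  | node b cs :: rest => b :: (labelsF cs ++ labelsF rest)

/-- All labels lie in `{1, …, m}`. -/
def WFforest (m : ℕ) (f : List LTree) : Prop := ∀ b ∈ labelsF f, 1 ≤ b ∧ b ≤ m

/-- Number of vertices of a forest (= number of non-root vertices of the tree). -/
def countF : List LTree → ℕ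
  | [] => 0
  | node _ cs :: rest => 1 + countF cs + countF rest

/-- Matched pairs of (1-indexed) inward/outward positions in the Euler string,
together with the vertex contributing them, for a forest whose Euler string
starts at offset `o`. -/
def pairsV (m : ℕ) : List LTree → ℕ → List (LTree × ℕ × ℕ)
  | [], _ => []
  | node b cs :: rest, o =>
      (node b cs, o + 1, o + (eulerF m cs).length + 2) ::
        (pairsV m cs (o + 1) ++ pairsV m rest (o + (eulerF m cs).length + 2))

/-- Matched pairs of (1-indexed) inward/outward positions. -/
def pairsF (m : ℕ) (f : List LTree) (o : ℕ) : List (ℕ × ℕ) :=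
  (pairsV m f o).map Prod.snd

/-- Number of inward symbols (≤ m) strictly between 1-indexed positions ℓ and i. -/
def inBetween (m : ℕ) (s : List ℕ) (ℓ i : ℕ) : ℕ :=
  ((s.drop ℓ).take (i - ℓ - 1)).countP (fun t => decide (t ≤ m))

/-- Number of outward symbols (> m) strictly between 1-indexed positions ℓ and i. -/
def outBetween (m : ℕ) (s : List ℕ) (ℓ i : ℕ) : ℕ :=
  ((s.drop ℓ).take (i - ℓ - 1)).countP (fun t => decide (m < t))

end LTree


namespace LTree

/-- `DeleteAt m f ℓ i g`: `g` is obtained from `f` by deleting the (non-root) vertex whose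
inward/outward edges occupy the (1-indexed) positions `ℓ` and `i`, promoting its children
in order to its former position. -/
inductive DeleteAt (m : ℕ) : List LTree → ℕ → ℕ → List LTree → Prop
  | here {b : ℕ} {cs rest : List LTree} :
      DeleteAt m (node b cs :: rest) 1 ((eulerF m cs).length + 2) (cs ++ rest)
  | child {b p q : ℕ} {cs cs' rest : List LTree} :
      DeleteAt m cs p q cs' →
      DeleteAt m (node b cs :: rest) (p + 1) (q + 1) (node b cs' :: rest)
  | tail {p q : ℕ} {t : LTree} {rest rest' : List LTree} :
      DeleteAt m rest p q rest' →
      DeleteAt m (t :: rest) (p + (eulerT m t).length) (q + (eulerT m t).length)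
        (t :: rest')

end LTree

/-- One string edit operation: substitution, deletion, or insertion of a symbol. -/
inductive EditStep : List ℕ → List ℕ → Prop
  | subst (u w : List ℕ) (a b : ℕ) : EditStep (u ++ a :: w) (u ++ b :: w)
  | delete (u w : List ℕ) (a : ℕ) : EditStep (u ++ a :: w) (u ++ w)
  | insert (u w : List ℕ) (a : ℕ) : EditStep (u ++ w) (u ++ a :: w)

/-- String edit distance at most `d`. -/
def EditLe : ℕ → List ℕ → List ℕ → Prop
  | 0, s, t => s = t
  | d + 1, s, t => s = t ∨ ∃ u, EditStep s u ∧ EditLe d u t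

/-! The inward and outward symbols of the deleted vertex sit at positions `ℓ` and `i`, and
between them lies the Euler string of its children, which is exactly the Euler string of those
children once promoted. So, by induction on where the vertex sits, `E(T) = u ++ a :: (v ++ b :: w)`
and `E(U) = u ++ v ++ w`; two single-symbol deletions then witness edit distance at most 2. -/

lemma EditStep.editLe_succ {s t r : List ℕ} {d : ℕ} (hst : EditStep s t) (htr : EditLe d t r) :
    EditLe (d + 1) s r :=
  Or.inr ⟨t, hst, htr⟩

lemma editLe_two_of_erase_two (u v w : List ℕ) (a b : ℕ) :
    EditLe 2 (u ++ a :: (v ++ b :: w)) (u ++ (v ++ w)) := by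
  refine (EditStep.delete u (v ++ b :: w) a).editLe_succ (EditStep.editLe_succ ?_ rfl)
  simpa using EditStep.delete (u ++ v) w b

lemma List.take_append_take_drop_append_drop {α : Type*}
    (u v w : List α) (a b : α) :
    let s := u ++ a :: (v ++ b :: w)
    s.take u.length ++ (s.drop (u.length + 1)).take v.length ++ s.drop (u.length + v.length + 2)
      = u ++ (v ++ w) := by
  intro s
  have hdrop : s.drop (u.length + v.length + 2) = w := by
    rw [show s = (u ++ a :: v ++ [b]) ++ w by simp [s],
      show u.length + v.length + 2 = (u ++ a :: v ++ [b]).length by simp; omega, List.drop_left]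
  simp [s, hdrop]

namespace LTree

lemma eulerF_append (m : ℕ) (f g : List LTree) :
    eulerF m (f ++ g) = eulerF m f ++ eulerF m g := by
  induction f with
  | nil => simp [eulerF]
  | cons t rest ih => cases t; simp [eulerF, ih]

lemma eulerF_cons (m : ℕ) (t : LTree) (rest : List LTree) :
    eulerF m (t :: rest) = eulerT m t ++ eulerF m rest := by
  cases t; simp [eulerF, eulerT]

lemma DeleteAt.exists_eulerF_eq {m : ℕ} {f g : List LTree} {ℓ i : ℕ}
    (h : DeleteAt m f ℓ i g) :
    ∃ (u v w : List ℕ) (a b : ℕ),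
      eulerF m f = u ++ a :: (v ++ b :: w) ∧ eulerF m g = u ++ (v ++ w) ∧
      ℓ = u.length + 1 ∧ i = u.length + v.length + 2 := by
  induction h with
  | @here b cs rest =>
    exact ⟨[], eulerF m cs, eulerF m rest, b, b + m, by simp [eulerF],
      eulerF_append m cs rest, rfl, by simp⟩
  | @child b p q cs cs' rest _ ih =>
    obtain ⟨u, v, w, a, a', hf, hg, rfl, rfl⟩ := ih
    refine ⟨b :: u, v, w ++ (b + m) :: eulerF m rest, a, a', ?_, ?_, rfl, ?_⟩
    · simp [eulerF, hf]
    · simp [eulerF, hg]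
    · simp only [List.length_cons]; omega
  | @tail p q t rest rest' _ ih =>
    obtain ⟨u, v, w, a, a', hf, hg, rfl, rfl⟩ := ih
    refine ⟨eulerT m t ++ u, v, w, a, a', ?_, ?_, ?_, ?_⟩
    · simp [eulerF_cons, hf]
    · simp [eulerF_cons, hg]
    · simp only [List.length_append]; omega
    · simp only [List.length_append]; omega

end LTree

theorem delete_vertex_euler (m : ℕ) (f g : List LTree) (ℓ i : ℕ)
    (h : LTree.DeleteAt m f ℓ i g) :
    LTree.eulerF m g =
      (LTree.eulerF m f).take (ℓ - 1) ++
        ((LTree.eulerF m f).drop ℓ).take (i - ℓ - 1) ++ (LTree.eulerF m f).drop i ∧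
    EditLe 2 (LTree.eulerF m f) (LTree.eulerF m g) := by
  obtain ⟨u, v, w, a, b, hf, hg, rfl, rfl⟩ := h.exists_eulerF_eq
  have hℓ : u.length + 1 - 1 = u.length := rfl
  have hi : u.length + v.length + 2 - (u.length + 1) - 1 = v.length := by omega
  rw [hf, hg, hℓ, hi]
  exact ⟨(List.take_append_take_drop_append_drop u v w a b).symm,
    editLe_two_of_erase_two u v w a b⟩
end

section
/- For each outward position of an Euler string there is a unique matching inward position: if E(T) = t₁,…,t_{2n} and i is a position with t_i > m, then there exists exactly one position ℓ such that ℓ < i, t_i = t_ℓ + m, the number of inward symbols strictly between positions ℓ and i equals the number of outward symbols strictly between them, and ℓ is maximal among positions satisfying the first three conditions; moreover this ℓ is precisely the inward edge position of the vertex whose outward edge is at position i. -/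
namespace LTree

/-! The outward symbol `b + m` at position `i` belongs to a vertex `node b cs`, whose inward
symbol `b` sits at some `ℓ₀ < i` with the Euler string `E` of `cs` in between. `E` is balanced
and each of its suffixes has at least as many outward as inward symbols, so `ℓ₀` matches `i`.
A later candidate `ℓ'` must carry the label `b ≤ m`, hence be inward, and then the rest of `E`
after it has strictly more outward than inward symbols, so `ℓ'` does not match. -/

variable {m : ℕ}

def inCount (m : ℕ) (s : List ℕ) : ℕ := s.countP (fun t => decide (t ≤ m))

def outCount (m : ℕ) (s : List ℕ) : ℕ := s.countP (fun t => decide (m < t))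

lemma inCount_append (s t : List ℕ) : inCount m (s ++ t) = inCount m s + inCount m t :=
  List.countP_append

lemma outCount_append (s t : List ℕ) : outCount m (s ++ t) = outCount m s + outCount m t :=
  List.countP_append

lemma inCount_cons_of_le {a : ℕ} (ha : a ≤ m) (s : List ℕ) :
    inCount m (a :: s) = inCount m s + 1 := by
  simp [inCount, ha]

lemma inCount_cons_of_lt {a : ℕ} (ha : m < a) (s : List ℕ) : inCount m (a :: s) = inCount m s := by
  simp [inCount, Nat.not_le.mpr ha]

lemma outCount_cons_of_le {a : ℕ} (ha : a ≤ m) (s : List ℕ) :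
    outCount m (a :: s) = outCount m s := by
  simp [outCount, Nat.not_lt.mpr ha]

lemma outCount_cons_of_lt {a : ℕ} (ha : m < a) (s : List ℕ) :
    outCount m (a :: s) = outCount m s + 1 := by
  simp [outCount, ha]

def SuffixOutwardDominant (m : ℕ) (s : List ℕ) : Prop :=
  ∀ j, inCount m (s.drop j) ≤ outCount m (s.drop j)

lemma SuffixOutwardDominant.append {s t : List ℕ} (hs : SuffixOutwardDominant m s)
    (ht : SuffixOutwardDominant m t) : SuffixOutwardDominant m (s ++ t) := by
  intro j
  have := hs j
  have := ht (j - s.length)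
  rw [List.drop_append, inCount_append, outCount_append]
  omega

lemma SuffixOutwardDominant.cons_of_lt {a : ℕ} {s : List ℕ} (ha : m < a)
    (hs : SuffixOutwardDominant m s) : SuffixOutwardDominant m (a :: s) := by
  rintro (_ | j)
  · have := hs 0
    rw [List.drop_zero] at this ⊢
    rw [inCount_cons_of_lt ha, outCount_cons_of_lt ha]
    omega
  · exact hs j

lemma SuffixOutwardDominant.inCount_lt_outCount {s : List ℕ} (hs : SuffixOutwardDominant m s)
    {k : ℕ} (hk : k < s.length) (hin : s[k] ≤ m) :
    inCount m (s.drop (k + 1)) < outCount m (s.drop (k + 1)) := by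
  have := hs k
  rw [List.drop_eq_getElem_cons hk, inCount_cons_of_le hin, outCount_cons_of_le hin] at this
  omega

lemma WFforest.of_cons {b : ℕ} {cs rest : List LTree} (h : WFforest m (node b cs :: rest)) :
    (1 ≤ b ∧ b ≤ m) ∧ WFforest m cs ∧ WFforest m rest := by
  refine ⟨h b ?_, fun x hx => h x ?_, fun x hx => h x ?_⟩ <;> simp_all [labelsF]

lemma inCount_eulerF_eq_outCount {f : List LTree} (hwf : WFforest m f) :
    inCount m (eulerF m f) = outCount m (eulerF m f) := by
  induction f using eulerF.induct with
  | case1 => simp [eulerF, inCount, outCount]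
  | case2 b cs rest ihc ihr =>
    obtain ⟨⟨hb1, hb2⟩, hcs, hrest⟩ := hwf.of_cons
    have hout : m < b + m := by omega
    rw [eulerF, inCount_cons_of_le hb2, outCount_cons_of_le hb2, inCount_append, outCount_append,
      inCount_cons_of_lt hout, outCount_cons_of_lt hout, ihc hcs, ihr hrest]
    omega

lemma suffixOutwardDominant_eulerF {f : List LTree} (hwf : WFforest m f) :
    SuffixOutwardDominant m (eulerF m f) := by
  induction f using eulerF.induct with
  | case1 => intro j; simp [eulerF, inCount, outCount]
  | case2 b cs rest ihc ihr =>
    obtain ⟨⟨hb1, -⟩, hcs, hrest⟩ := hwf.of_cons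
    rintro (_ | j)
    · exact (inCount_eulerF_eq_outCount hwf).le
    · rw [eulerF, List.drop_succ_cons]
      exact ((ihc hcs).append ((ihr hrest).cons_of_lt (by omega))) j

lemma pairsF_cons (b : ℕ) (cs rest : List LTree) (o : ℕ) :
    pairsF m (node b cs :: rest) o = (o + 1, o + (eulerF m cs).length + 2) ::
      (pairsF m cs (o + 1) ++ pairsF m rest (o + (eulerF m cs).length + 2)) := by
  simp [pairsF, pairsV]

lemma exists_eulerF_eq_of_mem_pairsF {f : List LTree} {o ℓ i : ℕ} (h : (ℓ, i) ∈ pairsF m f o) :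
    ∃ b cs p q, eulerF m f = p ++ b :: (eulerF m cs ++ (b + m) :: q) ∧
      ℓ = o + p.length + 1 ∧ i = o + p.length + (eulerF m cs).length + 2 ∧
      b :: labelsF cs ⊆ labelsF f := by
  induction f using eulerF.induct generalizing o with
  | case1 => simp [pairsF, pairsV] at h
  | case2 b cs rest ihc ihr =>
    rw [pairsF_cons, List.mem_cons, List.mem_append] at h
    rw [labelsF]
    rcases h with h | h | h
    · obtain ⟨rfl, rfl⟩ := Prod.mk.inj h
      exact ⟨b, cs, [], eulerF m rest, by simp [eulerF], by simp, by simp,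
        List.cons_subset_cons _ (List.subset_append_left _ _)⟩
    · obtain ⟨b', cs', p, q, heq, rfl, rfl, hsub⟩ := ihc h
      refine ⟨b', cs', b :: p, q ++ (b + m) :: eulerF m rest, ?_, ?_, ?_, ?_⟩
      · simp [eulerF, heq]
      · simp only [List.length_cons]; omega
      · simp only [List.length_cons]; omega
      · exact List.Subset.trans hsub (List.subset_cons_of_subset _ (List.subset_append_left _ _))
    · obtain ⟨b', cs', p, q, heq, rfl, rfl, hsub⟩ := ihr h
      refine ⟨b', cs', b :: (eulerF m cs ++ (b + m) :: p), q, ?_, ?_, ?_, ?_⟩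
      · simp [eulerF, heq]
      · simp only [List.length_cons, List.length_append]; omega
      · simp only [List.length_cons, List.length_append]; omega
      · exact List.Subset.trans hsub (List.subset_cons_of_subset _ (List.subset_append_right _ _))

lemma exists_mem_pairsF_of_lt_getD {f : List LTree} (hwf : WFforest m f) {j : ℕ}
    (hj : j < (eulerF m f).length) (hout : m < (eulerF m f).getD j 0) (o : ℕ) :
    ∃ ℓ, (ℓ, o + j + 1) ∈ pairsF m f o := by
  induction f using eulerF.induct generalizing j o with
  | case1 => simp [eulerF] at hj
  | case2 b cs rest ihc ihr =>
    obtain ⟨⟨-, hb⟩, hcs, hrest⟩ := hwf.of_cons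
    rw [eulerF] at hj hout
    simp only [pairsF_cons, List.mem_cons, List.mem_append, Prod.mk.injEq]
    obtain _ | k := j
    · rw [List.getD_cons_zero] at hout; omega
    rw [List.getD_cons_succ] at hout
    simp only [List.length_cons, List.length_append] at hj
    rcases lt_trichotomy k (eulerF m cs).length with hk | rfl | hk
    · rw [List.getD_append _ _ _ _ hk] at hout
      obtain ⟨ℓ, hℓ⟩ := ihc hcs hk hout (o + 1)
      exact ⟨ℓ, Or.inr (Or.inl (by rwa [show o + (k + 1) + 1 = o + 1 + k + 1 by omega]))⟩
    · exact ⟨o + 1, Or.inl ⟨rfl, by omega⟩⟩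
    · obtain ⟨k, rfl⟩ := Nat.exists_eq_add_of_lt hk
      rw [List.getD_append_right _ _ _ _ (by omega), show (eulerF m cs).length + k + 1 -
        (eulerF m cs).length = k + 1 by omega, List.getD_cons_succ] at hout
      obtain ⟨ℓ, hℓ⟩ := ihr hrest (by omega) hout (o + (eulerF m cs).length + 2)
      exact ⟨ℓ, Or.inr (Or.inr (by rwa [show o + ((eulerF m cs).length + k + 1 + 1) + 1 =
        o + (eulerF m cs).length + 2 + k + 1 by omega]))⟩

def IsMatch (m : ℕ) (s : List ℕ) (ℓ i : ℕ) : Prop :=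
  s.getD (i - 1) 0 = s.getD (ℓ - 1) 0 + m ∧ inBetween m s ℓ i = outBetween m s ℓ i

/-- Spelled out rather than through `IsMatch`, so that it unfolds to the conjunction in
`outward_unique_match`. -/
def IsLastMatch (m : ℕ) (s : List ℕ) (ℓ i : ℕ) : Prop :=
  1 ≤ ℓ ∧ ℓ < i ∧ s.getD (i - 1) 0 = s.getD (ℓ - 1) 0 + m ∧
    inBetween m s ℓ i = outBetween m s ℓ i ∧ ∀ ℓ', ℓ < ℓ' → ℓ' < i → ¬IsMatch m s ℓ' i

lemma isLastMatch_iff_eq {s : List ℕ} {ℓ₀ i : ℕ} (h₁ : 1 ≤ ℓ₀) (hlt : ℓ₀ < i)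
    (hmatch : IsMatch m s ℓ₀ i) (hlast : ∀ ℓ', ℓ₀ < ℓ' → ℓ' < i → ¬IsMatch m s ℓ' i) (ℓ : ℕ) :
    IsLastMatch m s ℓ i ↔ ℓ = ℓ₀ := by
  constructor
  · rintro ⟨-, hℓi, hlabel, hbal, hℓlast⟩
    rcases lt_trichotomy ℓ ℓ₀ with h | h | h
    · exact absurd hmatch (hℓlast ℓ₀ h hlt)
    · exact h
    · exact absurd ⟨hlabel, hbal⟩ (hlast ℓ h hℓi)
  · rintro rfl
    exact ⟨h₁, hlt, hmatch.1, hmatch.2, hlast⟩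

lemma inBetween_outBetween_eq_drop (p E q : List ℕ) (b c : ℕ) {j : ℕ} (hj : j ≤ E.length) :
    inBetween m (p ++ b :: (E ++ c :: q)) (p.length + 1 + j) (p.length + E.length + 2) =
        inCount m (E.drop j) ∧
      outBetween m (p ++ b :: (E ++ c :: q)) (p.length + 1 + j) (p.length + E.length + 2) =
        outCount m (E.drop j) := by
  have hseg : ((p ++ b :: (E ++ c :: q)).drop (p.length + 1 + j)).take (E.length - j) =
      E.drop j := by
    rw [← List.drop_drop, List.append_cons, List.drop_left' (by simp),
      List.drop_append_of_le_length hj]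
    exact List.take_left' (by simp)
  unfold inBetween outBetween
  rw [show p.length + E.length + 2 - (p.length + 1 + j) - 1 = E.length - j by omega, hseg]
  exact ⟨rfl, rfl⟩

lemma isLastMatch_iff {b : ℕ} {p E q : List ℕ} (hb : b ≤ m) (hbal : inCount m E = outCount m E)
    (hsuf : SuffixOutwardDominant m E) (ℓ : ℕ) :
    IsLastMatch m (p ++ b :: (E ++ (b + m) :: q)) ℓ (p.length + E.length + 2) ↔
      ℓ = p.length + 1 := by
  have hgetD_out : (p ++ b :: (E ++ (b + m) :: q)).getD (p.length + E.length + 2 - 1) 0 =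
      b + m := by
    rw [show p.length + E.length + 2 - 1 = p.length + (E.length + 1) by omega,
      List.getD_append_right _ _ _ _ (by omega), Nat.add_sub_cancel_left, List.getD_cons_succ,
      List.getD_append_right _ _ _ _ le_rfl, Nat.sub_self, List.getD_cons_zero]
  refine isLastMatch_iff_eq (by omega) (by omega) ⟨?_, ?_⟩ ?_ ℓ
  · rw [hgetD_out, Nat.add_sub_cancel, List.getD_append_right _ _ _ _ le_rfl, Nat.sub_self,
      List.getD_cons_zero]
  · obtain ⟨hin, hout⟩ :=
      inBetween_outBetween_eq_drop (m := m) p E q b (b + m) (Nat.zero_le E.length)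
    rw [add_zero] at hin hout
    rw [hin, hout, List.drop_zero, hbal]
  · rintro ℓ' hℓ' hℓ'i ⟨hlabel, hbalℓ'⟩
    obtain ⟨k, rfl⟩ := Nat.exists_eq_add_of_lt hℓ'
    have hk : k < E.length := by omega
    rw [hgetD_out, show p.length + 1 + k + 1 - 1 = p.length + (k + 1) by omega,
      List.getD_append_right _ _ _ _ (by omega), Nat.add_sub_cancel_left, List.getD_cons_succ,
      List.getD_append _ _ _ _ hk, List.getD_eq_getElem _ _ hk] at hlabel
    obtain ⟨hin, hout⟩ :=
      inBetween_outBetween_eq_drop (m := m) p E q b (b + m) (j := k + 1) (by omega)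
    rw [← add_assoc] at hin hout
    rw [hin, hout] at hbalℓ'
    exact absurd hbalℓ' (hsuf.inCount_lt_outCount hk (by omega)).ne

end LTree

theorem outward_unique_match_general (m : ℕ) (f : List LTree)
    (hwf : LTree.WFforest m f) (i : ℕ) (hi1 : 1 ≤ i)
    (hi2 : i ≤ (LTree.eulerF m f).length)
    (hout : m < (LTree.eulerF m f).getD (i - 1) 0) :
    (∃! ℓ, 1 ≤ ℓ ∧ ℓ < i ∧
        (LTree.eulerF m f).getD (i - 1) 0 = (LTree.eulerF m f).getD (ℓ - 1) 0 + m ∧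
        LTree.inBetween m (LTree.eulerF m f) ℓ i =
          LTree.outBetween m (LTree.eulerF m f) ℓ i ∧
        (∀ ℓ', ℓ < ℓ' → ℓ' < i →
          ¬((LTree.eulerF m f).getD (i - 1) 0 = (LTree.eulerF m f).getD (ℓ' - 1) 0 + m ∧
            LTree.inBetween m (LTree.eulerF m f) ℓ' i =
              LTree.outBetween m (LTree.eulerF m f) ℓ' i))) ∧
    (∀ ℓ, (1 ≤ ℓ ∧ ℓ < i ∧
        (LTree.eulerF m f).getD (i - 1) 0 = (LTree.eulerF m f).getD (ℓ - 1) 0 + m ∧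
        LTree.inBetween m (LTree.eulerF m f) ℓ i =
          LTree.outBetween m (LTree.eulerF m f) ℓ i ∧
        (∀ ℓ', ℓ < ℓ' → ℓ' < i →
          ¬((LTree.eulerF m f).getD (i - 1) 0 = (LTree.eulerF m f).getD (ℓ' - 1) 0 + m ∧
            LTree.inBetween m (LTree.eulerF m f) ℓ' i =
              LTree.outBetween m (LTree.eulerF m f) ℓ' i))) →
      (ℓ, i) ∈ LTree.pairsF m f 0) := by
  obtain ⟨ℓ₀, hmem⟩ := LTree.exists_mem_pairsF_of_lt_getD hwf (j := i - 1) (by omega) hout 0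
  rw [show 0 + (i - 1) + 1 = i by omega] at hmem
  obtain ⟨b, cs, p, q, hs, hℓ₀, hi, hsub⟩ := LTree.exists_eulerF_eq_of_mem_pairsF hmem
  have hb := hwf b (hsub List.mem_cons_self)
  have hcs : LTree.WFforest m cs := fun x hx => hwf x (hsub (List.mem_cons_of_mem b hx))
  have key : ∀ ℓ, LTree.IsLastMatch m (LTree.eulerF m f) ℓ i ↔ ℓ = ℓ₀ := by
    rw [hs, hi, hℓ₀, zero_add]
    exact LTree.isLastMatch_iff hb.2 (LTree.inCount_eulerF_eq_outCount hcs)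
      (LTree.suffixOutwardDominant_eulerF hcs)
  exact ⟨⟨ℓ₀, (key ℓ₀).2 rfl, fun ℓ h => (key ℓ).1 h⟩, fun ℓ h => (key ℓ).1 h ▸ hmem⟩

theorem outward_unique_match (m : ℕ) (hm : 1 ≤ m) (f : List LTree)
    (hwf : LTree.WFforest m f) (i : ℕ) (hi1 : 1 ≤ i)
    (hi2 : i ≤ (LTree.eulerF m f).length)
    (hout : m < (LTree.eulerF m f).getD (i - 1) 0) :
    (∃! ℓ, 1 ≤ ℓ ∧ ℓ < i ∧
        (LTree.eulerF m f).getD (i - 1) 0 = (LTree.eulerF m f).getD (ℓ - 1) 0 + m ∧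
        LTree.inBetween m (LTree.eulerF m f) ℓ i =
          LTree.outBetween m (LTree.eulerF m f) ℓ i ∧
        (∀ ℓ', ℓ < ℓ' → ℓ' < i →
          ¬((LTree.eulerF m f).getD (i - 1) 0 = (LTree.eulerF m f).getD (ℓ' - 1) 0 + m ∧
            LTree.inBetween m (LTree.eulerF m f) ℓ' i =
              LTree.outBetween m (LTree.eulerF m f) ℓ' i))) ∧
    (∀ ℓ, (1 ≤ ℓ ∧ ℓ < i ∧
        (LTree.eulerF m f).getD (i - 1) 0 = (LTree.eulerF m f).getD (ℓ - 1) 0 + m ∧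
        LTree.inBetween m (LTree.eulerF m f) ℓ i =
          LTree.outBetween m (LTree.eulerF m f) ℓ i ∧
        (∀ ℓ', ℓ < ℓ' → ℓ' < i →
          ¬((LTree.eulerF m f).getD (i - 1) 0 = (LTree.eulerF m f).getD (ℓ' - 1) 0 + m ∧
            LTree.inBetween m (LTree.eulerF m f) ℓ' i =
              LTree.outBetween m (LTree.eulerF m f) ℓ' i))) →
      (ℓ, i) ∈ LTree.pairsF m f 0) :=
  outward_unique_match_general m f hwf i hi1 hi2 hout
end
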